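/- arXiv:2110.03454 — 4 statements merged into one kernel-verified Lean document; each statement's English description precedes it below -/
import Mathlib

section
/- With G as in the collection, ∫₀^∞ (1 - G(t)) dt = ρ/λ. That is, the mean of the distribution equals α = ρ/λ. -/
/-!
Writing `a = λ e^{-ρ}` and `b = λ (1 - e^{-ρ})`, so that `a + b = λ`, the tail is
`1 - G t = (1/λ) · b c / (a e^{ct} + b)`, and `t ↦ -log (a + b e^{-ct})` is an antiderivative of
`b c / (a e^{ct} + b)`. Its values at `0` and `∞` are `-log λ` and `-log (λ e^{-ρ}) = ρ - log λ`.
-/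

open Real MeasureTheory Filter Set

section ExpIntegral

variable {a b c : ℝ}

theorem hasDerivAt_neg_log_add_mul_exp_neg (x : ℝ) (h : 0 < a + b * exp (-(c * x))) :
    HasDerivAt (fun t => -log (a + b * exp (-(c * t)))) (b * c / (a * exp (c * x) + b)) x := by
  have hexp : HasDerivAt (fun t => a + b * exp (-(c * t))) (b * (exp (-(c * x)) * -c)) x :=
    ((((hasDerivAt_id x).const_mul c).neg.exp).const_mul b).const_add a |>.congr_deriv
      (by simp)
  refine (hexp.log h.ne').neg.congr_deriv ?_
  have hinv : exp (c * x) * exp (-(c * x)) = 1 := by rw [← exp_add]; simp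
  have hpos : 0 < a * exp (c * x) + b := by
    rw [show a * exp (c * x) + b = exp (c * x) * (a + b * exp (-(c * x))) by
      linear_combination (-b) * hinv]
    positivity
  field_simp
  linear_combination (b * c * a) * hinv

theorem integrableOn_Ioi_div_mul_exp_add (ha : 0 < a) (hb : 0 ≤ b) (hc : 0 < c) :
    IntegrableOn (fun t => b * c / (a * exp (c * t) + b)) (Ioi 0) := by
  have hpos : ∀ t, 0 < a * exp (c * t) + b := fun t => by positivity
  have hdom : IntegrableOn (fun t => b * c / a * exp (-c * t)) (Ioi 0) :=
    (exp_neg_integrableOn_Ioi 0 hc).const_mul _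
  refine hdom.mono' ?_ (ae_of_all _ fun t => ?_)
  · exact (continuous_const.div (by fun_prop) fun t => (hpos t).ne').aestronglyMeasurable
  · rw [Real.norm_eq_abs, abs_of_nonneg (div_nonneg (by positivity) (hpos t).le), neg_mul,
      exp_neg, ← div_eq_mul_inv, div_div]
    exact div_le_div_of_nonneg_left (by positivity) (by positivity) (by linarith)

theorem integral_Ioi_div_mul_exp_add (ha : 0 < a) (hb : 0 ≤ b) (hc : 0 < c) :
    ∫ t in Ioi 0, b * c / (a * exp (c * t) + b) = log (a + b) - log a := by
  have hpos : ∀ t, 0 < a + b * exp (-(c * t)) := fun t => by positivity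
  have hlim : Tendsto (fun t => -log (a + b * exp (-(c * t)))) atTop (nhds (-log a)) := by
    have hdecay : Tendsto (fun t => exp (-(c * t))) atTop (nhds 0) :=
      tendsto_exp_neg_atTop_nhds_zero.comp (tendsto_id.const_mul_atTop hc)
    simpa using ((continuousAt_log (by simpa using ha.ne')).tendsto.comp
      (tendsto_const_nhds.add (hdecay.const_mul b))).neg
  rw [integral_Ioi_of_hasDerivAt_of_tendsto
    (hasDerivAt_neg_log_add_mul_exp_neg 0 (hpos 0)).continuousAt.continuousWithinAt
    (fun x _ => hasDerivAt_neg_log_add_mul_exp_neg x (hpos x))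
    (integrableOn_Ioi_div_mul_exp_add ha hb hc) hlim]
  simp only [mul_zero, neg_zero, exp_zero, mul_one]
  ring

end ExpIntegral

theorem stmt2_general (lam ρ p β : ℝ) (hlam : 0 < lam) (hρ : 0 < ρ)
    (hp1 : p < 1) (hβ : -lam < β)
    (c : ℝ) (hc : c = lam + (lam * p + β) / (1 - p))
    (G : ℝ → ℝ)
    (hG : ∀ t, G t = 1 - ((1 - exp (-ρ)) * c) / (lam * exp (-ρ) * (exp (c * t) - 1) + lam)) :
    ∫ t in Set.Ioi (0 : ℝ), (1 - G t) = ρ / lam := by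
  have hc0 : 0 < c := by
    have : -lam < (lam * p + β) / (1 - p) := by
      rw [lt_div_iff₀ (by linarith)]
      linarith
    rw [hc]
    linarith
  set a := lam * exp (-ρ)
  set b := lam * (1 - exp (-ρ))
  have hb : 0 ≤ b := mul_nonneg hlam.le (by simp [hρ.le])
  have htail : ∀ t, 1 - G t = lam⁻¹ * (b * c / (a * exp (c * t) + b)) := fun t => by
    rw [hG, show lam * exp (-ρ) * (exp (c * t) - 1) + lam = a * exp (c * t) + b by ring]
    field_simp
    ring
  have hab : a + b = lam := by ring
  simp_rw [htail]
  rw [integral_const_mul, integral_Ioi_div_mul_exp_add (by positivity) hb hc0, hab,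
    log_mul hlam.ne' (exp_pos _).ne', log_exp]
  field_simp
  ring

theorem stmt2 (lam ρ p β : ℝ) (hlam : 0 < lam) (hρ : 0 < ρ)
    (hp0 : 0 ≤ p) (hp1 : p < 1) (hβ : -lam < β)
    (hβ' : β ≤ lam * (1 - p * exp ρ) / (exp ρ - 1))
    (c : ℝ) (hc : c = lam + (lam * p + β) / (1 - p))
    (G : ℝ → ℝ)
    (hG : ∀ t, G t = 1 - ((1 - exp (-ρ)) * c) / (lam * exp (-ρ) * (exp (c * t) - 1) + lam)) :
    ∫ t in Set.Ioi (0 : ℝ), (1 - G t) = ρ / lam :=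
  stmt2_general lam ρ p β hlam hρ hp1 hβ c hc G hG
end

section
/- The function G from the collection satisfies the Riccati-type differential equation G'(t) = (1/(1-p))·(β + λp + λ(1-p)G(t))·(1 - G(t)) for all t > 0. -/
open Real

set_option maxHeartbeats 1000000 in
theorem stmt3 (lam ρ p β : ℝ) (hlam : 0 < lam) (hρ : 0 < ρ)
    (hp0 : 0 ≤ p) (hp1 : p < 1) (hβ : -lam < β)
    (c : ℝ) (hc : c = lam + (lam * p + β) / (1 - p))
    (G : ℝ → ℝ)
    (hG : ∀ t, G t = 1 - ((1 - exp (-ρ)) * c) / (lam * exp (-ρ) * (exp (c * t) - 1) + lam)) :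
    ∀ t > (0 : ℝ),
      HasDerivAt G ((1 / (1 - p)) * (β + lam * p + lam * (1 - p) * G t) * (1 - G t)) t := by
  intro t ht
  have hp : (1:ℝ) - p ≠ 0 := by linarith
  set K := (1 - exp (-ρ)) * c with hK
  have h1 : exp (-ρ) < 1 := exp_lt_one_iff.mpr (by linarith)
  have h2 : (0:ℝ) < exp (-ρ) := exp_pos _
  have h3 : (0:ℝ) < exp (c * t) := exp_pos _
  have hDpos : 0 < lam * exp (-ρ) * (exp (c * t) - 1) + lam := by nlinarith [mul_pos (mul_pos hlam h2) h3, mul_pos hlam (sub_pos.mpr h1)]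
  have hDne : lam * exp (-ρ) * (exp (c * t) - 1) + lam ≠ 0 := ne_of_gt hDpos
  have hGe : G = fun s => 1 - K / (lam * exp (-ρ) * (exp (c * s) - 1) + lam) := by
    funext s; rw [hG]
  have hexp : HasDerivAt (fun s => exp (c * s)) (c * exp (c * t)) t := by
    exact ((Real.hasDerivAt_exp (c * t)).comp t
      ((hasDerivAt_id t).const_mul c)).congr_deriv (by simp only [id, mul_one]; ring)
  have hD : HasDerivAt (fun s => lam * exp (-ρ) * (exp (c * s) - 1) + lam)
      (lam * exp (-ρ) * (c * exp (c * t))) t := by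
    simpa using ((hexp.sub_const 1).const_mul (lam * exp (-ρ))).add_const lam
  have hfrac : HasDerivAt (fun s => K / (lam * exp (-ρ) * (exp (c * s) - 1) + lam))
      ((0 * (lam * exp (-ρ) * (exp (c * t) - 1) + lam) - K * (lam * exp (-ρ) * (c * exp (c * t)))) /
        (lam * exp (-ρ) * (exp (c * t) - 1) + lam) ^ 2) t :=
    (hasDerivAt_const t K).div hD hDne
  have hmain : HasDerivAt G
      ((0 : ℝ) - ((0 * (lam * exp (-ρ) * (exp (c * t) - 1) + lam) - K * (lam * exp (-ρ) * (c * exp (c * t)))) /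
        (lam * exp (-ρ) * (exp (c * t) - 1) + lam) ^ 2)) t := by
    rw [hGe]
    exact (hasDerivAt_const t (1:ℝ)).sub hfrac
  have hβeq : β = (c - lam) * (1 - p) - lam * p := by
    rw [hc]; field_simp; ring
  convert hmain using 1
  rw [hG t, hβeq, hK]
  have hD' : rexp (-ρ) * (rexp (c * t) - 1) + 1 ≠ 0 := by nlinarith
  field_simp
  ring
end

section
/- The cross-ratio identity: if G_i(t) = 1 - ((1 - e^{-ρ_i})·c)/(λ·e^{-ρ_i}·(e^{c·t} - 1) + λ) for i = 1,2,3,4 with the same c > 0 and λ > 0, and the ρ_i are distinct positive reals, then for all t > 0, ((G₄(t) - G₂(t))/(G₄(t) - G₁(t))) · ((G₃(t) - G₁(t))/(G₃(t) - G₂(t))) = ((e^{-ρ₄} - e^{-ρ₂})/(e^{-ρ₄} - e^{-ρ₁})) · ((e^{-ρ₃} - e^{-ρ₁})/(e^{-ρ₃} - e^{-ρ₂})). -/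
/-! For fixed `t`, `G ρ t` is a Möbius transformation of `exp (-ρ)`, and Möbius transformations
preserve cross-ratios: `G ρ t - G σ t = k / (D ρ * D σ) * (exp (-ρ) - exp (-σ))` with `k ≠ 0` and
`D` the denominator of `G`, and the factors `D` cancel in the cross-ratio. -/

open Real

def crossRatio {K : Type*} [Field K] (z₁ z₂ z₃ z₄ : K) : K :=
  (z₄ - z₂) / (z₄ - z₁) * ((z₃ - z₁) / (z₃ - z₂))

/-- Coincident points are covered by `x / 0 = 0`: a vanishing denominator vanishes on both sides. -/
theorem crossRatio_map_of_sub_eq {ι K : Type*} [Field K] {f g D : ι → K} {k : K} (hk : k ≠ 0)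
    (hD : ∀ i, D i ≠ 0) (hf : ∀ i j, f i - f j = k / (D i * D j) * (g i - g j))
    (i₁ i₂ i₃ i₄ : ι) :
    crossRatio (f i₁) (f i₂) (f i₃) (f i₄) = crossRatio (g i₁) (g i₂) (g i₃) (g i₄) := by
  have hscale : k / (D i₄ * D i₂) / (k / (D i₄ * D i₁)) *
      (k / (D i₃ * D i₁) / (k / (D i₃ * D i₂))) = 1 := by
    have := hD i₁; have := hD i₂; have := hD i₃; have := hD i₄
    field_simp
  simp only [crossRatio, hf, mul_div_mul_comm]
  rw [mul_mul_mul_comm, hscale, one_mul]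

theorem one_sub_mul_div_sub_one_sub_mul_div {K : Type*} [Field K] {lam c E x y : K}
    (hx : lam * x * (E - 1) + lam ≠ 0) (hy : lam * y * (E - 1) + lam ≠ 0) :
    (1 - (1 - x) * c / (lam * x * (E - 1) + lam)) - (1 - (1 - y) * c / (lam * y * (E - 1) + lam))
      = c * lam * E / ((lam * x * (E - 1) + lam) * (lam * y * (E - 1) + lam)) * (x - y) := by
  rw [sub_sub_sub_cancel_left, div_sub_div _ _ hy hx, div_mul_eq_mul_div, mul_comm (_ + lam)]
  ring

theorem stmt5_general (lam c : ℝ) (hlam : 0 < lam) (hc : 0 < c)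
    (ρ₁ ρ₂ ρ₃ ρ₄ : ℝ)
    (G : ℝ → ℝ → ℝ)
    (hG : ∀ ρ t, G ρ t = 1 - ((1 - exp (-ρ)) * c) / (lam * exp (-ρ) * (exp (c * t) - 1) + lam)) :
    ∀ t > (0 : ℝ),
      ((G ρ₄ t - G ρ₂ t) / (G ρ₄ t - G ρ₁ t)) * ((G ρ₃ t - G ρ₁ t) / (G ρ₃ t - G ρ₂ t)) =
      ((exp (-ρ₄) - exp (-ρ₂)) / (exp (-ρ₄) - exp (-ρ₁))) *
        ((exp (-ρ₃) - exp (-ρ₁)) / (exp (-ρ₃) - exp (-ρ₂))) := by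
  intro t ht
  have hE : 1 < exp (c * t) := one_lt_exp_iff.mpr (mul_pos hc ht)
  have hD : ∀ ρ, lam * exp (-ρ) * (exp (c * t) - 1) + lam ≠ 0 := fun ρ => by
    have := mul_pos (mul_pos hlam (exp_pos (-ρ))) (sub_pos.mpr hE)
    linarith
  have hk : c * lam * exp (c * t) ≠ 0 := by positivity
  exact crossRatio_map_of_sub_eq (f := fun ρ => G ρ t) (g := fun ρ => exp (-ρ)) hk hD
    (fun ρ σ => by simp only [hG]; exact one_sub_mul_div_sub_one_sub_mul_div (hD ρ) (hD σ))
    ρ₁ ρ₂ ρ₃ ρ₄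

theorem stmt5 (lam c : ℝ) (hlam : 0 < lam) (hc : 0 < c)
    (ρ₁ ρ₂ ρ₃ ρ₄ : ℝ) (h1 : 0 < ρ₁) (h2 : 0 < ρ₂) (h3 : 0 < ρ₃) (h4 : 0 < ρ₄)
    (h12 : ρ₁ ≠ ρ₂) (h13 : ρ₁ ≠ ρ₃) (h14 : ρ₁ ≠ ρ₄)
    (h23 : ρ₂ ≠ ρ₃) (h24 : ρ₂ ≠ ρ₄) (h34 : ρ₃ ≠ ρ₄)
    (G : ℝ → ℝ → ℝ)
    (hG : ∀ ρ t, G ρ t = 1 - ((1 - exp (-ρ)) * c) / (lam * exp (-ρ) * (exp (c * t) - 1) + lam)) :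
    ∀ t > (0 : ℝ),
      ((G ρ₄ t - G ρ₂ t) / (G ρ₄ t - G ρ₁ t)) * ((G ρ₃ t - G ρ₁ t) / (G ρ₃ t - G ρ₂ t)) =
      ((exp (-ρ₄) - exp (-ρ₂)) / (exp (-ρ₄) - exp (-ρ₁))) *
        ((exp (-ρ₃) - exp (-ρ₁)) / (exp (-ρ₃) - exp (-ρ₂))) :=
  stmt5_general lam c hlam hc ρ₁ ρ₂ ρ₃ ρ₄ G hG
end

section
/- Moment bounds: for n ≥ 1, the n-th moment E[T^n] = ∫₀^∞ t^n · g(t) dt of the distribution with density g(t) = ((1 - e^{-ρ})·e^{-ρ}·c²·e^{-c·t})/(λ·(e^{-ρ} + (1 - e^{-ρ})·e^{-c·t})²) satisfies ((1 - e^{-ρ})·e^{-ρ}/λ)·(n!/c^{n-1}) ≤ E[T^n] ≤ ((e^{ρ} - 1)/λ)·(n!/c^{n-1}). -/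
/-!
Write `a = e^{-ρ}`. For `t ≥ 0` the denominator `a + (1 - a) e^{-ct}` of `g` lies in `[a, 1]`, so
`g` is squeezed between `(1 - a) a c² / λ · e^{-ct}` and `(1 - a) / a · c² / λ · e^{-ct}`.
Integrating against `tⁿ` with `∫₀^∞ tⁿ e^{-ct} dt = n! / c^{n+1}` (a Gamma integral) gives both
bounds, since `(1 - a) / a = e^ρ - 1`.
-/

open Real MeasureTheory Set
open scoped Nat

lemma integral_pow_mul_exp_neg_mul_Ioi (n : ℕ) {c : ℝ} (hc : 0 < c) :
    ∫ t in Ioi (0 : ℝ), t ^ n * exp (-(c * t)) = n ! / c ^ (n + 1) := by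
  have h := integral_rpow_mul_exp_neg_mul_Ioi (a := n + 1) (by positivity) hc
  simp only [add_sub_cancel_right, rpow_natCast] at h
  rw [h, Gamma_nat_eq_factorial, one_div, inv_rpow hc.le, ← Nat.cast_succ, rpow_natCast,
    inv_mul_eq_div]

lemma integrableOn_pow_mul_exp_neg_mul_Ioi (n : ℕ) {c : ℝ} (hc : 0 < c) :
    IntegrableOn (fun t : ℝ => t ^ n * exp (-(c * t))) (Ioi 0) :=
  .of_integral_ne_zero (by rw [integral_pow_mul_exp_neg_mul_Ioi n hc]; positivity)

lemma setIntegral_mem_Icc_of_forall_mem_Icc {α : Type*} [MeasurableSpace α] {μ : Measure α}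
    {s : Set α} {f k : α → ℝ} {A B : ℝ} (hs : MeasurableSet s)
    (hf : AEStronglyMeasurable f (μ.restrict s)) (hk : IntegrableOn k s μ)
    (hbound : ∀ x ∈ s, f x ∈ Icc (A * k x) (B * k x)) :
    ∫ x in s, f x ∂μ ∈ Icc (A * ∫ x in s, k x ∂μ) (B * ∫ x in s, k x ∂μ) := by
  have hbound_ae : ∀ᵐ x ∂μ.restrict s, f x ∈ Icc (A * k x) (B * k x) :=
    (ae_restrict_iff' hs).mpr (.of_forall hbound)
  have hfi : IntegrableOn f s μ := integrable_of_le_of_le hf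
    (hbound_ae.mono fun _ hx => hx.1) (hbound_ae.mono fun _ hx => hx.2)
    (hk.const_mul A) (hk.const_mul B)
  rw [← integral_const_mul, ← integral_const_mul]
  exact ⟨setIntegral_mono_on (hk.const_mul A) hfi hs fun x hx => (hbound x hx).1,
    setIntegral_mono_on hfi (hk.const_mul B) hs fun x hx => (hbound x hx).2⟩

lemma div_sq_mem_Icc {a u : ℝ} (ha0 : 0 < a) (ha1 : a ≤ 1) (hu0 : 0 ≤ u) (hu1 : u ≤ 1) :
    u / (a + (1 - a) * u) ^ 2 ∈ Icc u (u / a ^ 2) := by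
  have hDa : a ≤ a + (1 - a) * u := by nlinarith
  have hD1 : a + (1 - a) * u ≤ 1 := by
    nlinarith [mul_nonneg (sub_nonneg.2 ha1) (sub_nonneg.2 hu1)]
  refine ⟨?_, by gcongr⟩
  calc u = u / 1 ^ 2 := by simp
    _ ≤ u / (a + (1 - a) * u) ^ 2 := by gcongr

lemma density_mem_Icc_mul_exp_neg {lam a c t : ℝ} (hlam : 0 < lam) (ha0 : 0 < a) (ha1 : a < 1)
    (hc : 0 ≤ c) (ht : 0 ≤ t) :
    (1 - a) * a * c ^ 2 * exp (-(c * t)) / (lam * (a + (1 - a) * exp (-(c * t))) ^ 2) ∈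
      Icc ((1 - a) * a * c ^ 2 / lam * exp (-(c * t)))
        ((1 - a) / a * c ^ 2 / lam * exp (-(c * t))) := by
  set u := exp (-(c * t))
  obtain ⟨hlow, hup⟩ := div_sq_mem_Icc ha0 ha1.le (exp_pos _).le
    (exp_le_one_iff.mpr (by nlinarith) : u ≤ 1)
  have hK : 0 ≤ (1 - a) * a * c ^ 2 / lam := by
    have : 0 < 1 - a := by linarith
    positivity
  have hdensity : (1 - a) * a * c ^ 2 * u / (lam * (a + (1 - a) * u) ^ 2) =
      (1 - a) * a * c ^ 2 / lam * (u / (a + (1 - a) * u) ^ 2) := by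
    field_simp
  rw [hdensity]
  constructor
  · exact mul_le_mul_of_nonneg_left hlow hK
  · calc _ ≤ (1 - a) * a * c ^ 2 / lam * (u / a ^ 2) := mul_le_mul_of_nonneg_left hup hK
      _ = _ := by field_simp

theorem stmt8 (lam ρ c : ℝ) (hlam : 0 < lam) (hρ : 0 < ρ) (hc : 0 < c)
    (g : ℝ → ℝ)
    (hg : ∀ t, g t = ((1 - exp (-ρ)) * exp (-ρ) * c ^ 2 * exp (-(c * t))) /
        (lam * (exp (-ρ) + (1 - exp (-ρ)) * exp (-(c * t))) ^ 2))
    (n : ℕ) (hn : 1 ≤ n) :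
    ((1 - exp (-ρ)) * exp (-ρ) / lam) * ((Nat.factorial n : ℝ) / c ^ (n - 1)) ≤
        ∫ t in Set.Ioi (0 : ℝ), t ^ n * g t ∧
      ∫ t in Set.Ioi (0 : ℝ), t ^ n * g t ≤
        ((exp ρ - 1) / lam) * ((Nat.factorial n : ℝ) / c ^ (n - 1)) := by
  set a := exp (-ρ) with ha
  have ha0 : 0 < a := exp_pos _
  have ha1 : a < 1 := exp_lt_one_iff.mpr (neg_neg_of_pos hρ)
  have hmeas : AEStronglyMeasurable (fun t => t ^ n * g t) (volume.restrict (Ioi 0)) :=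
    (by rw [funext hg]; fun_prop : Measurable fun t => t ^ n * g t).aestronglyMeasurable
  have hbound : ∀ t ∈ Ioi (0 : ℝ), t ^ n * g t ∈
      Icc ((1 - a) * a * c ^ 2 / lam * (t ^ n * exp (-(c * t))))
        ((1 - a) / a * c ^ 2 / lam * (t ^ n * exp (-(c * t)))) := by
    intro t (ht : 0 < t)
    obtain ⟨hlow, hup⟩ := density_mem_Icc_mul_exp_neg hlam ha0 ha1 hc.le ht.le
    have htn := pow_nonneg ht.le n
    rw [hg]
    constructor <;>
      nlinarith [mul_le_mul_of_nonneg_left hlow htn, mul_le_mul_of_nonneg_left hup htn]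
  obtain ⟨hlow, hup⟩ := setIntegral_mem_Icc_of_forall_mem_Icc measurableSet_Ioi hmeas
    (integrableOn_pow_mul_exp_neg_mul_Ioi n hc) hbound
  rw [integral_pow_mul_exp_neg_mul_Ioi n hc] at hlow hup
  have hexp : exp ρ - 1 = (1 - a) / a := by rw [ha, exp_neg]; field_simp
  obtain ⟨m, rfl⟩ := Nat.exists_eq_add_of_le' hn
  rw [Nat.add_sub_cancel, hexp]
  refine ⟨hlow.trans_eq' ?_, hup.trans_eq ?_⟩ <;> field_simp <;> ring
end
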